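/- arXiv:1109.6398 — 5 statements merged into one kernel-verified Lean document; each statement's English description precedes it below -/
import Mathlib

section
/- Let f and g be non-constant polynomials with real coefficients, of degrees m and n respectively, and for s > 0 let θ_s be the angle between the vectors (a_i s^i) and (b_i s^i) of their coefficients (padded with zeros to length max(m,n)+1). Then |Res(f,g)| ≤ |sin θ_s|^{min(m,n)} · ‖f‖_{2,s}^n · ‖g‖_{2,s}^m for all s > 0. -/
/-!
Scaling column `j` of the Sylvester matrix by `s⁻ʲ` and its rows by suitable powers of `s`
multiplies the determinant by `s ^ (m * n)` and turns it into the Sylvester matrix of the sequences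
`aᵢ sⁱ` and `bᵢ sⁱ`, whose rows have lengths `s ^ (m / 2) ‖f‖_{2,s}` and `s ^ (n / 2) ‖g‖_{2,s}`.
Hadamard's inequality then gives the bound without the sine factor. Each of the last `min m n`
rows is a row of `g` ending in the same column as an earlier row of `f`, so the inner product of
the two is that of the full scaled coefficient vectors; subtracting from the `g`-row its
projection onto that `f`-row leaves the determinant unchanged and shortens the row by the factor
`|sin θ_s|`.
-/

open Polynomial Finset

/-- The Sylvester matrix of two real polynomials `f` and `g` (with `g.natDegree` rows of
coefficients of `f` and `f.natDegree` rows of coefficients of `g`). -/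
noncomputable def sylvester (f g : Polynomial ℝ) :
    Matrix (Fin (f.natDegree + g.natDegree)) (Fin (f.natDegree + g.natDegree)) ℝ :=
  Matrix.of fun i j =>
    if (i : ℕ) < g.natDegree then
      (if (i : ℕ) ≤ (j : ℕ) ∧ (j : ℕ) ≤ (i : ℕ) + f.natDegree then
        f.coeff (f.natDegree - ((j : ℕ) - (i : ℕ))) else 0)
    else
      (if (i : ℕ) - g.natDegree ≤ (j : ℕ) ∧ (j : ℕ) ≤ (i : ℕ) - g.natDegree + g.natDegree then
        g.coeff (g.natDegree - ((j : ℕ) - ((i : ℕ) - g.natDegree))) else 0)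

/-- The resultant of two real polynomials: the determinant of their Sylvester matrix. -/
noncomputable def resultant (f g : Polynomial ℝ) : ℝ := (_root_.sylvester f g).det

/-- The skewed 2-norm `‖f‖_{2,s} = (∑ᵢ |aᵢ s^{i - d/2}|²)^{1/2}` of a real polynomial. -/
noncomputable def skewNorm (f : Polynomial ℝ) (s : ℝ) : ℝ :=
  Real.sqrt (∑ i ∈ Finset.range (f.natDegree + 1),
    (f.coeff i) ^ 2 * s ^ (2 * (i : ℝ) - (f.natDegree : ℝ)))

/-- `|sin θ_s|` where `θ_s` is the angle between the skew-scaled coefficient vectors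
`(aᵢ sⁱ)` and `(bᵢ sⁱ)` of `f` and `g`, padded with zeros to length `max(m,n) + 1`. -/
noncomputable def sinTheta (f g : Polynomial ℝ) (s : ℝ) : ℝ :=
  let D := max f.natDegree g.natDegree
  let u : Fin (D + 1) → ℝ := fun i => f.coeff i * s ^ (i : ℕ)
  let v : Fin (D + 1) → ℝ := fun i => g.coeff i * s ^ (i : ℕ)
  Real.sqrt (1 - (∑ i, u i * v i) ^ 2 / ((∑ i, u i ^ 2) * (∑ i, v i ^ 2)))

open Matrix

theorem abs_det_le_prod_sqrt_dotProduct_self {N : ℕ} (A : Matrix (Fin N) (Fin N) ℝ) :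
    |A.det| ≤ ∏ i, √(A i ⬝ᵥ A i) := by
  have : Fact (Module.finrank ℝ (EuclideanSpace ℝ (Fin N)) = N) := ⟨finrank_euclideanSpace_fin⟩
  let b := EuclideanSpace.basisFun (Fin N) ℝ
  let v i := WithLp.toLp 2 (A i)
  have hdet : b.toBasis.det v = A.det := by
    rw [Module.Basis.det_apply, ← det_transpose]
    congr 1
  have hadamard := b.toBasis.orientation.abs_volumeForm_apply_le v
  rw [Orientation.volumeForm_robust' _ b, hdet] at hadamard
  refine hadamard.trans_eq (prod_congr rfl fun i _ => ?_)
  simp [v, EuclideanSpace.norm_eq, dotProduct, sq]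

theorem det_sub_smul_of_lt {R ι : Type*} [CommRing R] [Fintype ι] [DecidableEq ι] [LinearOrder ι]
    (A : Matrix ι ι R) (P : ι → Prop) [DecidablePred P] (p : ι → ι) (c : ι → R)
    (hp : ∀ i, P i → p i < i) :
    (of fun i => if P i then A i - c i • A (p i) else A i).det = A.det := by
  let L : Matrix ι ι R := of fun i j => if P i ∧ j = p i then c i else 0
  have hL : ∀ i j, i ≤ j → L i j = 0 := fun i j hij =>
    if_neg fun h => (hij.trans_lt (h.2 ▸ hp i h.1)).false
  have hLA : (of fun i => if P i then A i - c i • A (p i) else A i) = (1 - L) * A := by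
    rw [sub_mul, one_mul]
    ext i j
    by_cases hi : P i <;> simp [L, hi, mul_apply, ite_and]
  have hT : (1 - L).IsLowerTriangular := fun i j (hij : i < j) => by
    simp [one_apply_ne hij.ne, hL i j hij.le]
  rw [hLA, det_mul, det_of_isLowerTriangular _ hT]
  simp [hL _ _ le_rfl]

theorem dotProduct_sub_proj_self {ι : Type*} [Fintype ι] (x y : ι → ℝ) :
    (y - (x ⬝ᵥ y / x ⬝ᵥ x) • x) ⬝ᵥ (y - (x ⬝ᵥ y / x ⬝ᵥ x) • x) =
      y ⬝ᵥ y * (1 - (x ⬝ᵥ y) ^ 2 / (x ⬝ᵥ x * y ⬝ᵥ y)) := by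
  rcases eq_or_ne (x ⬝ᵥ x) 0 with hx | hx
  · simp [hx]
  rcases eq_or_ne (y ⬝ᵥ y) 0 with hy | hy
  · simp [dotProduct_self_eq_zero.mp hy]
  simp only [sub_dotProduct, dotProduct_sub, smul_dotProduct, dotProduct_smul, smul_eq_mul,
    dotProduct_comm y x]
  field_simp
  ring

theorem prod_fin_ite_lt {M : Type*} [CommMonoid M] {N n : ℕ} (h : n ≤ N) (a b : M) :
    ∏ i : Fin N, (if (i : ℕ) < n then a else b) = a ^ n * b ^ (N - n) := by
  rw [Fin.prod_univ_eq_prod_range (fun i => if i < n then a else b), ← prod_range_mul_prod_Ico _ h,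
    prod_congr rfl fun k hk => if_pos (mem_range.1 hk),
    prod_congr rfl fun k hk => if_neg (mem_Ico.1 hk).1.not_gt, prod_const, prod_const,
    card_range, Nat.card_Ico]

theorem sum_range_eq_sum_range_of_eq_zero {M : Type*} [AddCommMonoid M] {φ : ℕ → M} {d K K' : ℕ}
    (hφ : ∀ k, d < k → φ k = 0) (hK : d < K) (hK' : d < K') :
    ∑ k ∈ range K, φ k = ∑ k ∈ range K', φ k := by
  have hφ' : ∀ k ≥ d + 1, φ k = 0 := fun k hk => hφ k hk
  rw [eventually_constant_sum hφ' hK, eventually_constant_sum hφ' hK']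

def shiftRev {R : Type*} [Zero R] (N e : ℕ) (φ : ℕ → R) : Fin N → R :=
  fun j => if (j : ℕ) ≤ e then φ (e - j) else 0

theorem shiftRev_dotProduct_shiftRev {R : Type*} [NonUnitalNonAssocSemiring R] {N e : ℕ}
    (he : e < N) (φ ψ : ℕ → R) :
    shiftRev N e φ ⬝ᵥ shiftRev N e ψ = ∑ k ∈ range (e + 1), φ k * ψ k := by
  have hsum : shiftRev N e φ ⬝ᵥ shiftRev N e ψ =
      ∑ j ∈ range N, if j ≤ e then φ (e - j) * ψ (e - j) else 0 := by
    rw [dotProduct,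
      ← Fin.sum_univ_eq_sum_range (fun j => if j ≤ e then φ (e - j) * ψ (e - j) else 0)]
    refine sum_congr rfl fun j _ => ?_
    simp only [shiftRev]
    split_ifs <;> simp
  rw [hsum, ← sum_filter, show (range N).filter (· ≤ e) = range (e + 1) by
      ext; simp only [mem_filter, mem_range]; omega,
    ← sum_range_reflect]
  refine sum_congr rfl fun k hk => ?_
  rw [Nat.add_sub_cancel, Nat.sub_sub_self (Nat.lt_succ_iff.mp (mem_range.mp hk))]

def sylvesterRows {R : Type*} [Zero R] (m n : ℕ) (u v : ℕ → R) :
    Matrix (Fin (m + n)) (Fin (m + n)) R :=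
  of fun i => if (i : ℕ) < n then shiftRev (m + n) (i + m) u else shiftRev (m + n) i v

theorem sylvesterRows_apply_of_lt {R : Type*} [Zero R] {m n : ℕ} (u v : ℕ → R) {i : Fin (m + n)}
    (hi : (i : ℕ) < n) :
    sylvesterRows m n u v i = shiftRev (m + n) (i + m) u :=
  if_pos hi

theorem sylvesterRows_apply_of_le {R : Type*} [Zero R] {m n : ℕ} (u v : ℕ → R) {i : Fin (m + n)}
    (hi : n ≤ (i : ℕ)) :
    sylvesterRows m n u v i = shiftRev (m + n) i v :=
  if_neg hi.not_gt

theorem sylvester_eq_sylvesterRows (f g : ℝ[X]) :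
    _root_.sylvester f g = sylvesterRows f.natDegree g.natDegree f.coeff g.coeff := by
  ext i j
  simp only [_root_.sylvester, sylvesterRows, of_apply]
  split_ifs <;> simp only [shiftRev] <;> split_ifs <;>
    first
    | rfl
    | exact congrArg _ (by omega)
    | (exfalso; omega)
    | exact (coeff_eq_zero_of_natDegree_lt (by omega)).symm

theorem det_sylvesterRows_mul_pow {K : Type*} [Field K] (m n : ℕ) (u v : ℕ → K) {s : K}
    (hs : s ≠ 0) :
    (sylvesterRows m n (fun k => u k * s ^ k) (fun k => v k * s ^ k)).det =
      s ^ (m * n) * (sylvesterRows m n u v).det := by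
  have hscale : sylvesterRows m n (fun k => u k * s ^ k) (fun k => v k * s ^ k) =
      of fun (i j : Fin (m + n)) => (s ^ (j : ℕ))⁻¹ * (of fun (i j : Fin (m + n)) =>
        ((if (i : ℕ) < n then s ^ m else 1) * s ^ (i : ℕ)) * sylvesterRows m n u v i j) i j := by
    have hshift : ∀ {e j : ℕ} (x : K), j ≤ e → x * s ^ (e - j) = (s ^ j)⁻¹ * (s ^ e * x) := by
      intro e j x h
      rw [pow_sub₀ s hs h]
      ring
    ext i j
    simp only [sylvesterRows, of_apply]
    split_ifs <;> simp only [shiftRev] <;> split_ifs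
    · rw [← pow_add, Nat.add_comm m (i : ℕ), hshift _ ‹_›]
    · rw [mul_zero, mul_zero]
    · rw [one_mul, hshift _ ‹_›]
    · rw [mul_zero, mul_zero]
  rw [hscale, det_mul_row, det_mul_column, ← mul_assoc, ← prod_mul_distrib]
  congr 1
  calc ∏ i : Fin (m + n), (s ^ (i : ℕ))⁻¹ * ((if (i : ℕ) < n then s ^ m else 1) * s ^ (i : ℕ))
      = ∏ i : Fin (m + n), (if (i : ℕ) < n then s ^ m else 1) :=
        prod_congr rfl fun i _ => by field_simp
    _ = s ^ (m * n) := by rw [prod_fin_ite_lt (by omega), one_pow, mul_one, ← pow_mul]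

theorem sylvesterRows_dotProduct_self_of_lt {R : Type*} [CommSemiring R] {m n : ℕ}
    {u : ℕ → R} (v : ℕ → R) (hu : ∀ k, m < k → u k = 0) {i : Fin (m + n)} (hi : (i : ℕ) < n)
    {K : ℕ} (hK : m < K) :
    sylvesterRows m n u v i ⬝ᵥ sylvesterRows m n u v i = ∑ k ∈ range K, u k ^ 2 := by
  rw [sylvesterRows_apply_of_lt u v hi, shiftRev_dotProduct_shiftRev (by omega)]
  simp only [← sq]
  exact sum_range_eq_sum_range_of_eq_zero (fun k hk => by simp [hu k hk]) (by omega) hK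

theorem sylvesterRows_dotProduct_self_of_le {R : Type*} [CommSemiring R] {m n : ℕ}
    (u : ℕ → R) {v : ℕ → R} (hv : ∀ k, n < k → v k = 0) {i : Fin (m + n)} (hi : n ≤ (i : ℕ))
    {K : ℕ} (hK : n < K) :
    sylvesterRows m n u v i ⬝ᵥ sylvesterRows m n u v i = ∑ k ∈ range K, v k ^ 2 := by
  rw [sylvesterRows_apply_of_le u v hi, shiftRev_dotProduct_shiftRev i.isLt]
  simp only [← sq]
  exact sum_range_eq_sum_range_of_eq_zero (fun k hk => by simp [hv k hk]) (by omega) hK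

theorem sylvesterRows_dotProduct_of_max_le {R : Type*} [CommSemiring R] {m n : ℕ}
    {u : ℕ → R} (v : ℕ → R) (hu : ∀ k, m < k → u k = 0) {i : Fin (m + n)}
    (hi : max m n ≤ (i : ℕ)) {K : ℕ} (hK : m < K) :
    sylvesterRows m n u v ⟨i - m, by omega⟩ ⬝ᵥ sylvesterRows m n u v i =
      ∑ k ∈ range K, u k * v k := by
  rw [sylvesterRows_apply_of_lt u v (i := ⟨i - m, _⟩) (by simp only; omega),
    sylvesterRows_apply_of_le u v (show n ≤ (i : ℕ) by omega)]
  simp only [show (i : ℕ) - m + m = i by omega]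
  rw [shiftRev_dotProduct_shiftRev i.isLt]
  exact sum_range_eq_sum_range_of_eq_zero (fun k hk => by simp [hu k hk]) (by omega) hK

theorem abs_det_sylvesterRows_le (m n : ℕ) (u v : ℕ → ℝ) (hu : ∀ k, m < k → u k = 0)
    (hv : ∀ k, n < k → v k = 0) :
    |(sylvesterRows m n u v).det| ≤
      √(1 - (∑ k ∈ range (max m n + 1), u k * v k) ^ 2 /
          ((∑ k ∈ range (max m n + 1), u k ^ 2) * ∑ k ∈ range (max m n + 1), v k ^ 2)) ^ min m n *
        √(∑ k ∈ range (max m n + 1), u k ^ 2) ^ n * √(∑ k ∈ range (max m n + 1), v k ^ 2) ^ m := by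
  set D := max m n
  set U := ∑ k ∈ range (D + 1), u k ^ 2
  set V := ∑ k ∈ range (D + 1), v k ^ 2
  set W := ∑ k ∈ range (D + 1), u k * v k
  have hmD : m ≤ D := le_max_left m n
  have hnD : n ≤ D := le_max_right m n
  set A := sylvesterRows m n u v
  let p (i : Fin (m + n)) : Fin (m + n) := ⟨i - m, by omega⟩
  have hU : ∀ i : Fin (m + n), (i : ℕ) < n → A i ⬝ᵥ A i = U := fun i hi =>
    sylvesterRows_dotProduct_self_of_lt v hu hi (by omega)
  have hV : ∀ i : Fin (m + n), n ≤ (i : ℕ) → A i ⬝ᵥ A i = V := fun i hi =>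
    sylvesterRows_dotProduct_self_of_le u hv hi (by omega)
  have hW : ∀ i : Fin (m + n), D ≤ (i : ℕ) → A (p i) ⬝ᵥ A i = W := fun i hi =>
    sylvesterRows_dotProduct_of_max_le v hu hi (by omega)
  let B (i : Fin (m + n)) : Fin (m + n) → ℝ := if D ≤ (i : ℕ) then A i - (W / U) • A (p i) else A i
  have hB : ∀ i, √(B i ⬝ᵥ B i) =
      (if (i : ℕ) < n then √U else √V) * (if (i : ℕ) < D then 1 else √(1 - W ^ 2 / (U * V))) := by
    intro i
    by_cases hD : D ≤ (i : ℕ)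
    · simp only [B, if_pos hD]
      rw [if_neg (by omega), if_neg (by omega), ← hU (p i) (by simp only [p]; omega), ← hW i hD,
        dotProduct_sub_proj_self, hV i (by omega),
        Real.sqrt_mul (sum_nonneg fun k _ => sq_nonneg (v k))]
    rw [if_pos (show (i : ℕ) < D by omega), mul_one]
    by_cases hn : (i : ℕ) < n
    · rw [if_pos hn, ← hU i hn]
      simp only [B, if_neg hD]
    · rw [if_neg hn, ← hV i (not_lt.mp hn)]
      simp only [B, if_neg hD]
  calc |A.det| = |(of B).det| := by
        rw [det_sub_smul_of_lt A _ p _ fun i hi => Fin.lt_def.mpr (by simp only [p]; omega)]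
    _ ≤ ∏ i, √(B i ⬝ᵥ B i) := abs_det_le_prod_sqrt_dotProduct_self (of B)
    _ = ∏ i : Fin (m + n), (if (i : ℕ) < n then √U else √V) *
          (if (i : ℕ) < D then 1 else √(1 - W ^ 2 / (U * V))) := prod_congr rfl fun i _ => hB i
    _ = _ := by
      rw [prod_mul_distrib, prod_fin_ite_lt (by omega), prod_fin_ite_lt (by omega), one_pow,
        one_mul, show m + n - n = m by omega, show m + n - D = min m n by omega]
      ring

theorem sqrt_sum_sq_coeff_mul_pow_eq (f : ℝ[X]) {s : ℝ} (hs : 0 < s) {K : ℕ}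
    (hK : f.natDegree < K) :
    √(∑ k ∈ range K, (f.coeff k * s ^ k) ^ 2) = √s ^ f.natDegree * skewNorm f s := by
  set d := f.natDegree
  have hterm : ∀ k : ℕ, (f.coeff k * s ^ k) ^ 2 =
      s ^ d * (f.coeff k ^ 2 * s ^ (2 * (k : ℝ) - d)) := by
    intro k
    rw [Real.rpow_sub hs, Real.rpow_natCast,
      show 2 * (k : ℝ) = ((2 * k : ℕ) : ℝ) by push_cast; ring, Real.rpow_natCast]
    field_simp
    ring
  have hsqrt : √(s ^ d) = √s ^ d := by
    rw [← Real.sqrt_sq (pow_nonneg (Real.sqrt_nonneg s) d), ← pow_mul, mul_comm, pow_mul,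
      Real.sq_sqrt hs.le]
  rw [sum_range_eq_sum_range_of_eq_zero (d := d) (K' := d + 1)
      (fun k hk => by simp [coeff_eq_zero_of_natDegree_lt hk]) hK (by omega),
    sum_congr rfl fun k _ => hterm k, ← mul_sum, Real.sqrt_mul (by positivity), hsqrt, skewNorm]

theorem sinTheta_eq_sqrt_sum_range (f g : ℝ[X]) (s : ℝ) :
    sinTheta f g s = √(1 -
      (∑ k ∈ range (max f.natDegree g.natDegree + 1), f.coeff k * s ^ k * (g.coeff k * s ^ k)) ^ 2 /
        ((∑ k ∈ range (max f.natDegree g.natDegree + 1), (f.coeff k * s ^ k) ^ 2) *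
          ∑ k ∈ range (max f.natDegree g.natDegree + 1), (g.coeff k * s ^ k) ^ 2)) := by
  simp only [sinTheta, Fin.sum_univ_eq_sum_range (fun k => f.coeff k * s ^ k * (g.coeff k * s ^ k)),
    Fin.sum_univ_eq_sum_range (fun k => (f.coeff k * s ^ k) ^ 2),
    Fin.sum_univ_eq_sum_range (fun k => (g.coeff k * s ^ k) ^ 2)]

theorem skewed_resultant_bound_general (f g : Polynomial ℝ) :
    ∀ s : ℝ, 0 < s →
      |_root_.resultant f g| ≤ sinTheta f g s ^ min f.natDegree g.natDegree *
        skewNorm f s ^ g.natDegree * skewNorm g s ^ f.natDegree := by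
  intro s hs
  unfold _root_.resultant
  have hbound := abs_det_sylvesterRows_le f.natDegree g.natDegree (fun k => f.coeff k * s ^ k)
    (fun k => g.coeff k * s ^ k) (fun k hk => by simp [coeff_eq_zero_of_natDegree_lt hk])
    (fun k hk => by simp [coeff_eq_zero_of_natDegree_lt hk])
  rw [det_sylvesterRows_mul_pow _ _ _ _ hs.ne', ← sylvester_eq_sylvesterRows, abs_mul,
    abs_of_pos (by positivity), ← sinTheta_eq_sqrt_sum_range,
    sqrt_sum_sq_coeff_mul_pow_eq f hs (by omega), sqrt_sum_sq_coeff_mul_pow_eq g hs (by omega)]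
    at hbound
  have hpow : (√s ^ f.natDegree) ^ g.natDegree * (√s ^ g.natDegree) ^ f.natDegree =
      s ^ (f.natDegree * g.natDegree) := by
    rw [← pow_mul, ← pow_mul, ← pow_add, mul_comm g.natDegree, ← two_mul, pow_mul,
      Real.sq_sqrt hs.le]
  refine le_of_mul_le_mul_left (hbound.trans_eq ?_) (pow_pos hs _)
  rw [← hpow]
  ring

/-- The skewed resultant bound:  for non-constant real polynomials `f` and `g` of degrees
`m` and `n`, `|Res(f,g)| ≤ |sin θ_s|^{min(m,n)} · ‖f‖_{2,s}ⁿ · ‖g‖_{2,s}ᵐ` for all `s > 0`. -/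
theorem skewed_resultant_bound (f g : Polynomial ℝ)
    (hf : 0 < f.natDegree) (hg : 0 < g.natDegree) :
    ∀ s : ℝ, 0 < s →
      |_root_.resultant f g| ≤ sinTheta f g s ^ min f.natDegree g.natDegree *
        skewNorm f s ^ g.natDegree * skewNorm g s ^ f.natDegree :=
  skewed_resultant_bound_general f g
end

section
/- Let H be a positive definite Hermitian matrix partitioned in block form H = [[H₁, X], [X*, H₂]] where H₁ and H₂ are square. Then det H ≤ det H₁ · det H₂, with equality if and only if X = 0. -/
open Matrix
open scoped ComplexOrder

/-!
Write `H = [[A, B], [Bᴴ, D]]`. The Schur complement `S = D - Bᴴ A⁻¹ B` is positive definite with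
`det H = det A · det S`, and `D = S + P` where `P = Bᴴ A⁻¹ B` is positive semidefinite.
Factoring `S = Tᴴ T` and `P = Tᴴ Q T` gives `det D = det S · det (1 + Q)`, and in terms of the
eigenvalues `λᵢ ≥ 0` of `Q`, `det (1 + Q) = ∏ (1 + λᵢ) ≥ 1 + tr Q ≥ 1`. Equality forces
`tr Q = 0`, hence `Q = 0`, `P = 0` and finally `B = 0` since `A⁻¹` is positive definite.
-/

theorem Finset.one_add_sum_le_prod_one_add {ι R : Type*} [CommSemiring R] [PartialOrder R]
    [IsOrderedRing R] (s : Finset ι) {f : ι → R} (hf : ∀ i ∈ s, 0 ≤ f i) :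
    1 + ∑ i ∈ s, f i ≤ ∏ i ∈ s, (1 + f i) := by
  classical
  induction s using Finset.induction_on with
  | empty => simp
  | insert a s ha ih =>
    rw [Finset.sum_insert ha, Finset.prod_insert ha]
    have hfa : 0 ≤ f a := hf a (Finset.mem_insert_self a s)
    have hs : ∀ i ∈ s, 0 ≤ f i := fun i hi => hf i (Finset.mem_insert_of_mem hi)
    calc 1 + (f a + ∑ i ∈ s, f i)
        ≤ 1 + (f a + ∑ i ∈ s, f i) + f a * ∑ i ∈ s, f i :=
          le_add_of_nonneg_right (mul_nonneg hfa (Finset.sum_nonneg hs))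
      _ = (1 + f a) * (1 + ∑ i ∈ s, f i) := by ring
      _ ≤ (1 + f a) * ∏ i ∈ s, (1 + f i) :=
          mul_le_mul_of_nonneg_left (ih hs) (add_nonneg zero_le_one hfa)

namespace Matrix

theorem det_fromBlocks_of_isUnit {R m n : Type*} [CommRing R] [Fintype m] [Fintype n]
    [DecidableEq m] [DecidableEq n] {A : Matrix m m R} (hA : IsUnit A) (B : Matrix m n R)
    (C : Matrix n m R) (D : Matrix n n R) :
    (fromBlocks A B C D).det = A.det * (D - C * A⁻¹ * B).det := by
  have := hA.invertible
  rw [det_fromBlocks₁₁, invOf_eq_nonsing_inv]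

variable {𝕜 m n : Type*} [RCLike 𝕜]

theorem IsHermitian.eq_fromBlocks_toBlocks {α : Type*} [Star α]
    {H : Matrix (m ⊕ n) (m ⊕ n) α} (hH : H.IsHermitian) :
    H = Matrix.fromBlocks H.toBlocks₁₁ H.toBlocks₁₂ H.toBlocks₁₂ᴴ H.toBlocks₂₂ := by
  conv_lhs => rw [← fromBlocks_toBlocks H]
  rw [← congr_arg toBlocks₂₁ hH]
  rfl

theorem PosDef.toBlocks₁₁ {H : Matrix (m ⊕ n) (m ⊕ n) 𝕜} (hH : H.PosDef) :
    H.toBlocks₁₁.PosDef :=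
  hH.submatrix Sum.inl_injective

section Square

variable [Fintype n] [DecidableEq n]

theorem IsHermitian.det_one_add {Q : Matrix n n 𝕜} (hQ : Q.IsHermitian) :
    (1 + Q).det = ∏ i, (1 + (hQ.eigenvalues i : 𝕜)) := by
  conv_lhs =>
    rw [hQ.spectral_theorem, ← map_one (Unitary.conjStarAlgAut 𝕜 _ hQ.eigenvectorUnitary),
      ← map_add, Unitary.conjStarAlgAut_apply,
      det_conj_of_mul_eq_one (Unitary.coe_mul_star_self _) (Unitary.coe_star_mul_self _),
      ← diagonal_one, diagonal_add, det_diagonal]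
  simp

theorem PosSemidef.one_add_trace_le_det_one_add {Q : Matrix n n 𝕜} (hQ : Q.PosSemidef) :
    1 + Q.trace ≤ (1 + Q).det := by
  rw [hQ.isHermitian.trace_eq_sum_eigenvalues, hQ.isHermitian.det_one_add]
  exact_mod_cast Finset.univ.one_add_sum_le_prod_one_add fun i _ => hQ.eigenvalues_nonneg i

theorem PosSemidef.det_one_add_eq_one_iff {Q : Matrix n n 𝕜} (hQ : Q.PosSemidef) :
    (1 + Q).det = 1 ↔ Q = 0 := by
  refine ⟨fun h => ?_, fun h => by simp [h]⟩
  have := hQ.one_add_trace_le_det_one_add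
  rw [h, add_le_iff_nonpos_right] at this
  exact hQ.trace_eq_zero_iff.mp (le_antisymm this hQ.trace_nonneg)

open scoped MatrixOrder in
theorem PosDef.exists_isUnit_eq_star_mul_self {S : Matrix n n 𝕜} (hS : S.PosDef) :
    ∃ T : Matrix n n 𝕜, IsUnit T ∧ S = star T * T := by
  obtain ⟨T, rfl⟩ := CStarAlgebra.nonneg_iff_eq_star_mul_self.mp hS.posSemidef.nonneg
  exact ⟨T, isUnit_of_mul_isUnit_right hS.isUnit, rfl⟩

theorem PosDef.conjTranspose_mul_mul_same_eq_zero_iff {A : Matrix n n 𝕜} (hA : A.PosDef)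
    {B : Matrix n m 𝕜} : Bᴴ * A * B = 0 ↔ B = 0 := by
  obtain ⟨T, hT, rfl⟩ := hA.exists_isUnit_eq_star_mul_self
  have hB : Bᴴ * (star T * T) * B = (T * B)ᴴ * (T * B) := by
    rw [conjTranspose_mul, star_eq_conjTranspose]
    simp only [Matrix.mul_assoc]
  have hdet : IsUnit T.det := (isUnit_iff_isUnit_det T).mp hT
  rw [hB, conjTranspose_mul_self_eq_zero]
  refine ⟨fun h => ?_, fun h => by rw [h, Matrix.mul_zero]⟩
  rw [← nonsing_inv_mul_cancel_left (A := T) B hdet, h, Matrix.mul_zero]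

theorem PosDef.exists_det_add_eq_det_mul_det_one_add {S P : Matrix n n 𝕜} (hS : S.PosDef)
    (hP : P.PosSemidef) :
    ∃ Q : Matrix n n 𝕜, Q.PosSemidef ∧ (Q = 0 ↔ P = 0) ∧ (S + P).det = S.det * (1 + Q).det := by
  obtain ⟨T, hT, rfl⟩ := hS.exists_isUnit_eq_star_mul_self
  have hdet : IsUnit T.det := (isUnit_iff_isUnit_det T).mp hT
  have hTT : star T * star T⁻¹ = 1 := by rw [← star_mul, nonsing_inv_mul T hdet, star_one]
  obtain ⟨Q, rfl⟩ : ∃ Q, P = star T * Q * T := ⟨star T⁻¹ * P * T⁻¹, by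
    simp only [← Matrix.mul_assoc, hTT, Matrix.one_mul]
    rw [Matrix.mul_assoc, nonsing_inv_mul T hdet, Matrix.mul_one]⟩
  refine ⟨Q, hT.posSemidef_star_left_conjugate_iff.mp hP, ?_, ?_⟩
  · rw [hT.mul_left_eq_zero, hT.star.mul_right_eq_zero]
  · have h : star T * T + star T * Q * T = star T * (1 + Q) * T := by
      rw [Matrix.mul_add, Matrix.add_mul, Matrix.mul_one]
    rw [h, det_mul, det_mul, det_mul]
    ring

theorem PosDef.det_le_det_add {S P : Matrix n n 𝕜} (hS : S.PosDef) (hP : P.PosSemidef) :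
    S.det ≤ (S + P).det := by
  obtain ⟨Q, hQ, -, hdet⟩ := hS.exists_det_add_eq_det_mul_det_one_add hP
  calc S.det = S.det * 1 := (mul_one _).symm
    _ ≤ S.det * (1 + Q).det := by
      gcongr
      · exact hS.det_pos.le
      · exact le_add_of_nonneg_right hQ.trace_nonneg |>.trans hQ.one_add_trace_le_det_one_add
    _ = (S + P).det := hdet.symm

theorem PosDef.det_add_eq_det_iff {S P : Matrix n n 𝕜} (hS : S.PosDef) (hP : P.PosSemidef) :
    (S + P).det = S.det ↔ P = 0 := by
  obtain ⟨Q, hQ, hQP, hdet⟩ := hS.exists_det_add_eq_det_mul_det_one_add hP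
  rw [hdet, mul_eq_left₀ hS.det_pos.ne', hQ.det_one_add_eq_one_iff, hQP]

end Square

section Blocks

variable [Fintype m] [Fintype n] [DecidableEq m] [DecidableEq n]
  {A : Matrix m m 𝕜} {B : Matrix m n 𝕜} {D : Matrix n n 𝕜}

theorem PosDef.schur_complement₁₁ (hH : (fromBlocks A B Bᴴ D).PosDef) :
    (D - Bᴴ * A⁻¹ * B).PosDef := by
  have hA : A.PosDef := by simpa using hH.toBlocks₁₁
  have := hA.isUnit.invertible
  have hS : (D - Bᴴ * A⁻¹ * B).PosSemidef := (PosDef.fromBlocks₁₁ B D hA).mp hH.posSemidef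
  rw [hS.posDef_iff_det_ne_zero]
  exact right_ne_zero_of_mul (det_fromBlocks_of_isUnit hA.isUnit B Bᴴ D ▸ hH.det_pos.ne')

theorem PosDef.det_fromBlocks_le (hH : (fromBlocks A B Bᴴ D).PosDef) :
    (fromBlocks A B Bᴴ D).det ≤ A.det * D.det := by
  have hA : A.PosDef := by simpa using hH.toBlocks₁₁
  have hP : (Bᴴ * A⁻¹ * B).PosSemidef := hA.inv.posSemidef.conjTranspose_mul_mul_same B
  rw [det_fromBlocks_of_isUnit hA.isUnit]
  gcongr
  · exact hA.det_pos.le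
  · simpa using hH.schur_complement₁₁.det_le_det_add hP

theorem PosDef.det_fromBlocks_eq_iff (hH : (fromBlocks A B Bᴴ D).PosDef) :
    (fromBlocks A B Bᴴ D).det = A.det * D.det ↔ B = 0 := by
  have hA : A.PosDef := by simpa using hH.toBlocks₁₁
  have hP : (Bᴴ * A⁻¹ * B).PosSemidef := hA.inv.posSemidef.conjTranspose_mul_mul_same B
  have h := hH.schur_complement₁₁.det_add_eq_det_iff hP
  rw [sub_add_cancel, hA.inv.conjTranspose_mul_mul_same_eq_zero_iff] at h
  rw [det_fromBlocks_of_isUnit hA.isUnit, mul_right_inj' hA.det_pos.ne', eq_comm, h]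

end Blocks

end Matrix

/-- Fischer's inequality: if `H` is a positive definite Hermitian matrix partitioned in the
block form `H = [[H₁, X], [X*, H₂]]` with `H₁` and `H₂` square, then
`det H ≤ det H₁ · det H₂`, with equality if and only if `X = 0`.  (The determinants are real
and positive; the inequality is stated using the complex order.) -/
theorem fischer_inequality {m n : ℕ}
    (H : Matrix (Fin m ⊕ Fin n) (Fin m ⊕ Fin n) ℂ) (hH : H.PosDef) :
    H.det ≤ H.toBlocks₁₁.det * H.toBlocks₂₂.det ∧
    (H.det = H.toBlocks₁₁.det * H.toBlocks₂₂.det ↔ H.toBlocks₁₂ = 0) := by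
  obtain ⟨A, B, D, rfl⟩ : ∃ A B D, H = fromBlocks A B Bᴴ D :=
    ⟨_, _, _, hH.isHermitian.eq_fromBlocks_toBlocks⟩
  simp only [toBlocks_fromBlocks₁₁, toBlocks_fromBlocks₁₂, toBlocks_fromBlocks₂₂]
  exact ⟨hH.det_fromBlocks_le, hH.det_fromBlocks_eq_iff⟩
end

section
/- Let d ≥ 2. A sequence [c₀,…,c_d] of integers is a geometric progression modulo N with: (i) all terms nonzero, (ii) gcd(c₀,N)=1, (iii) [c₀,…,c_{d−1}] a rational geometric progression, and (iv) [c₀,…,c_d] not a rational geometric progression, if and only if there exist nonzero integers a, p, m, k with gcd(m,p)=1, gcd(ap,N)=1, (a m^d − kN)/p a nonzero integer, and [c₀,…,c_d] = [a p^{d−1}, a p^{d−2} m, …, a m^{d−1}, (a m^d − kN)/p]. -/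
/-!
Write the ratio of the rational progression `c₀, …, c_{d-1}` in lowest terms as `m / p`. The
integer recurrence `p c_{i+1} = m c_i` forces `p^{d-1} ∣ c₀`, hence `c_i = a p^{d-1-i} m^i`.
As `c₀` is invertible mod `N`, the first congruence `v c₁ ≡ u c₀` says that the ratio `u / v`
agrees with `m / p` mod `N`, so the last one reads `p c_d ≡ m c_{d-1} = a m^d`, i.e.
`a m^d - p c_d = k N`; and `k ≠ 0` exactly because `c_d ≠ (m / p) c_{d-1}`. Conversely `m / p`
is a ratio mod `N`, while a rational ratio of the whole sequence would have to be
`c₁ / c₀ = m / p`, forcing `k N = 0`.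
-/

lemma intCast_eq_div_mul_iff {p m x y : ℤ} (hp : p ≠ 0) :
    (y : ℚ) = (m / p : ℚ) * x ↔ p * y = m * x := by
  rw [div_mul_eq_mul_div, eq_div_iff (Int.cast_ne_zero.mpr hp), mul_comm]
  exact_mod_cast Iff.rfl

lemma eq_div_of_intCast_eq_mul {p m x y : ℤ} {ρ : ℚ} (hx : x ≠ 0) (hp : p ≠ 0)
    (h : (y : ℚ) = ρ * x) (hxy : p * y = m * x) : ρ = m / p := by
  refine mul_right_cancel₀ (Int.cast_ne_zero.mpr hx) ?_
  rw [← h, intCast_eq_div_mul_iff hp]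
  exact hxy

lemma mul_pow_eq_mul_pow_of_mul_succ_eq {p m : ℤ} {f : ℕ → ℤ} {ℓ : ℕ}
    (h : ∀ i, i + 1 < ℓ → p * f (i + 1) = m * f i) : ∀ i < ℓ, f i * p ^ i = f 0 * m ^ i
  | 0, _ => by simp
  | i + 1, hi =>
    calc f (i + 1) * p ^ (i + 1) = (p * f (i + 1)) * p ^ i := by ring
      _ = (f i * p ^ i) * m := by rw [h i hi]; ring
      _ = f 0 * m ^ (i + 1) := by
        rw [mul_pow_eq_mul_pow_of_mul_succ_eq h i (by omega)]; ring

lemma exists_eq_mul_pow_mul_pow_iff {p m : ℤ} {f : ℕ → ℤ} {ℓ : ℕ} (hmp : IsCoprime m p)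
    (hp : p ≠ 0) :
    (∃ a, ∀ i < ℓ, f i = a * p ^ (ℓ - 1 - i) * m ^ i) ↔
      ∀ i, i + 1 < ℓ → p * f (i + 1) = m * f i := by
  constructor
  · rintro ⟨a, ha⟩ i hi
    rw [ha i (by omega), ha (i + 1) hi, show ℓ - 1 - i = ℓ - 1 - (i + 1) + 1 by omega]
    ring
  · intro h
    rcases ℓ.eq_zero_or_pos with rfl | hℓ
    · exact ⟨0, by simp⟩
    have hpow := mul_pow_eq_mul_pow_of_mul_succ_eq h
    obtain ⟨a, ha⟩ : p ^ (ℓ - 1) ∣ f 0 :=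
      hmp.symm.pow.dvd_of_dvd_mul_right (Dvd.intro_left _ (hpow (ℓ - 1) (by omega)))
    refine ⟨a, fun i hi => mul_right_cancel₀ (pow_ne_zero i hp) ?_⟩
    rw [hpow i hi, ha, ← pow_sub_mul_pow p (show i ≤ ℓ - 1 by omega)]
    ring

lemma dvd_mul_sub_mul_of_mul_eq {N u v p m x y : ℤ} (hx : IsCoprime x N)
    (hxy : p * y = m * x) (h : N ∣ v * y - u * x) : N ∣ v * m - u * p := by
  refine hx.symm.dvd_of_dvd_mul_left ?_
  rw [show x * (v * m - u * p) = p * (v * y - u * x) by linear_combination (-v) * hxy]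
  exact h.mul_left p

lemma dvd_mul_sub_mul_of_dvd {N u v p m x y : ℤ} (hv : IsCoprime v N)
    (hr : N ∣ v * m - u * p) (h : N ∣ v * y - u * x) : N ∣ p * y - m * x := by
  refine hv.symm.dvd_of_dvd_mul_left ?_
  rw [show v * (p * y - m * x) = p * (v * y - u * x) - x * (v * m - u * p) by ring]
  exact dvd_sub (h.mul_left p) (hr.mul_left x)

lemma exists_gp_params_of_modGP {d N : ℕ} (hd : 2 ≤ d) {f : ℕ → ℤ} {u v : ℤ} {ρ : ℚ}
    (hv : IsCoprime v N) (hmod : ∀ i < d, (N : ℤ) ∣ v * f (i + 1) - u * f i)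
    (hne : ∀ i < d + 1, f i ≠ 0) (hf0N : IsCoprime (f 0) N)
    (hρ : ∀ i, i + 1 < d → (f (i + 1) : ℚ) = ρ * f i)
    (hnot : ¬∃ ρ : ℚ, ∀ i < d, (f (i + 1) : ℚ) = ρ * f i) :
    ∃ a p m k : ℤ, a ≠ 0 ∧ p ≠ 0 ∧ m ≠ 0 ∧ k ≠ 0 ∧ IsCoprime m p ∧ IsCoprime (a * p) N ∧
      a * m ^ d - k * N = p * f d ∧ ∀ i < d, f i = a * p ^ (d - 1 - i) * m ^ i := by
  set m := ρ.num
  set p : ℤ := (ρ.den : ℤ) with hp_def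
  have hp : p ≠ 0 := Int.natCast_ne_zero.mpr ρ.den_nz
  have hmp : IsCoprime m p := ρ.isCoprime_num_den
  have hρmp : ρ = m / p := by rw [hp_def, Int.cast_natCast, Rat.num_div_den]
  have hrec : ∀ i, i + 1 < d → p * f (i + 1) = m * f i := fun i hi =>
    (intCast_eq_div_mul_iff hp).mp (hρmp ▸ hρ i hi)
  obtain ⟨a, ha⟩ := (exists_eq_mul_pow_mul_pow_iff hmp hp).mpr hrec
  have hf0 : f 0 = a * p ^ (d - 1) := by simpa using ha 0 (by omega)
  have hlast : f (d - 1) = a * m ^ (d - 1) := by simpa using ha (d - 1) (by omega)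
  have ha0 : a ≠ 0 := by
    rintro rfl
    exact hne 0 (by omega) (by simp [hf0])
  have hm0 : m ≠ 0 := by
    intro hm
    exact hne 1 (by omega) (by simp [ha 1 (by omega), hm])
  have hratio : (N : ℤ) ∣ v * m - u * p :=
    dvd_mul_sub_mul_of_mul_eq hf0N (hrec 0 (by omega)) (hmod 0 (by omega))
  rw [hf0] at hf0N
  have hpN : IsCoprime p N := (IsCoprime.pow_left_iff (by omega)).mp hf0N.of_mul_left_right
  have hN : (N : ℤ) ∣ p * f d - m * f (d - 1) := by
    have h := hmod (d - 1) (by omega)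
    rw [Nat.sub_add_cancel (by omega)] at h
    exact dvd_mul_sub_mul_of_dvd hv hratio h
  obtain ⟨k, hk⟩ := dvd_sub_comm.mp hN
  have hk0 : k ≠ 0 := by
    rintro rfl
    refine hnot ⟨m / p, fun i hi => (intCast_eq_div_mul_iff hp).mpr ?_⟩
    rcases (by omega : i + 1 < d ∨ i + 1 = d) with hi | hi
    · exact hrec i hi
    · rw [hi, show i = d - 1 by omega]
      linear_combination -hk
  have hmd : m * m ^ (d - 1) = m ^ d := by rw [← pow_succ', Nat.sub_add_cancel (by omega)]
  exact ⟨a, p, m, k, ha0, hp, hm0, hk0, hmp, hf0N.of_mul_left_left.mul_left hpN,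
    by linear_combination hk - m * hlast - a * hmd, ha⟩

lemma modGP_of_gp_params {d N : ℕ} (hd : 2 ≤ d) (hN : 0 < N) {f : ℕ → ℤ} {a p m k : ℤ}
    (ha : a ≠ 0) (hp : p ≠ 0) (hm : m ≠ 0) (hk : k ≠ 0) (hmp : IsCoprime m p)
    (hapN : IsCoprime (a * p) N) (hfd : f d ≠ 0) (hlastN : a * m ^ d - k * N = p * f d)
    (hform : ∀ i < d, f i = a * p ^ (d - 1 - i) * m ^ i) :
    (∃ u v : ℤ, IsCoprime v N ∧ ∀ i < d, (N : ℤ) ∣ v * f (i + 1) - u * f i) ∧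
      (∀ i < d + 1, f i ≠ 0) ∧ IsCoprime (f 0) N ∧
      (∃ ρ : ℚ, ∀ i, i + 1 < d → (f (i + 1) : ℚ) = ρ * f i) ∧
      ¬∃ ρ : ℚ, ∀ i < d, (f (i + 1) : ℚ) = ρ * f i := by
  have hrec := (exists_eq_mul_pow_mul_pow_iff hmp hp).mp ⟨a, hform⟩
  have hf0 : f 0 = a * p ^ (d - 1) := by simpa using hform 0 (by omega)
  have hlast : f (d - 1) = a * m ^ (d - 1) := by simpa using hform (d - 1) (by omega)
  have hmd : m * m ^ (d - 1) = m ^ d := by rw [← pow_succ', Nat.sub_add_cancel (by omega)]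
  have hlast' : p * f d - m * f (d - 1) = -(k * N) := by
    linear_combination -hlastN - m * hlast - a * hmd
  refine ⟨⟨m, p, hapN.of_mul_left_right, fun i hi => ?_⟩, fun i hi => ?_, ?_,
    ⟨m / p, fun i hi => (intCast_eq_div_mul_iff hp).mpr (hrec i hi)⟩, ?_⟩
  · rcases (by omega : i + 1 < d ∨ i + 1 = d) with hi | hi
    · simp [hrec i hi]
    · rw [hi, show i = d - 1 by omega, hlast']
      exact (dvd_mul_left _ k).neg_right
  · rcases (by omega : i < d ∨ i = d) with hi | rfl
    · rw [hform i hi]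
      exact mul_ne_zero (mul_ne_zero ha (pow_ne_zero _ hp)) (pow_ne_zero _ hm)
    · exact hfd
  · rw [hf0]
    exact hapN.of_mul_left_left.mul_left hapN.of_mul_left_right.pow_left
  · rintro ⟨ρ, hρ⟩
    have hf0ne : f 0 ≠ 0 := by
      rw [hf0]
      exact mul_ne_zero ha (pow_ne_zero _ hp)
    have hρm : ρ = m / p := eq_div_of_intCast_eq_mul hf0ne hp (hρ 0 (by omega)) (hrec 0 (by omega))
    have h := hρ (d - 1) (by omega)
    rw [hρm, intCast_eq_div_mul_iff hp, Nat.sub_add_cancel (by omega)] at h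
    have hkN : k * (N : ℤ) = 0 := by linear_combination hlast' - h
    exact (mul_ne_zero hk (by exact_mod_cast hN.ne')) hkN

/-- Theorem 4.1: for `d ≥ 2`, a sequence `[c₀,…,c_d]` of integers is a geometric progression
modulo `N` (with some ratio `u/v`, `gcd(v,N)=1`) such that (i) all terms are nonzero,
(ii) `gcd(c₀,N)=1`, (iii) `[c₀,…,c_{d−1}]` is a rational geometric progression, and
(iv) `[c₀,…,c_d]` is not a rational geometric progression, if and only if there exist
nonzero integers `a, p, m, k` with `gcd(m,p)=1`, `gcd(ap,N)=1`, `(a m^d − kN)/p` a nonzero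
integer, and `[c₀,…,c_d] = [a p^{d−1}, a p^{d−2} m, …, a m^{d−1}, (a m^d − kN)/p]`. -/
theorem gp_classification (d : ℕ) (hd : 2 ≤ d) (N : ℕ) (hN : 0 < N)
    (c : Fin (d + 1) → ℤ) :
    ((∃ u v : ℤ, Int.gcd v N = 1 ∧
        ∀ i : ℕ, ∀ h : i < d,
          (N : ℤ) ∣ (v * c ⟨i + 1, by omega⟩ - u * c ⟨i, by omega⟩)) ∧
      (∀ i, c i ≠ 0) ∧
      Int.gcd (c 0) N = 1 ∧
      (∃ ρ : ℚ, ∀ i : ℕ, ∀ h : i + 1 < d,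
          (c ⟨i + 1, by omega⟩ : ℚ) = ρ * (c ⟨i, by omega⟩ : ℚ)) ∧
      ¬(∃ ρ : ℚ, ∀ i : ℕ, ∀ h : i < d,
          (c ⟨i + 1, by omega⟩ : ℚ) = ρ * (c ⟨i, by omega⟩ : ℚ)))
    ↔
    (∃ a p m k : ℤ, a ≠ 0 ∧ p ≠ 0 ∧ m ≠ 0 ∧ k ≠ 0 ∧
      Int.gcd m p = 1 ∧ Int.gcd (a * p) N = 1 ∧
      (∃ cd : ℤ, cd ≠ 0 ∧ a * m ^ d - k * (N : ℤ) = p * cd ∧ c ⟨d, by omega⟩ = cd) ∧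
      ∀ i : ℕ, ∀ h : i < d, c ⟨i, by omega⟩ = a * p ^ (d - 1 - i) * m ^ i) := by
  obtain ⟨f, hf⟩ : ∃ f : ℕ → ℤ, ∀ i (h : i < d + 1), c ⟨i, h⟩ = f i :=
    ⟨fun i => if h : i < d + 1 then c ⟨i, h⟩ else 0, fun i h => by simp [h]⟩
  have hc0 : c 0 = f 0 := hf 0 (by omega)
  simp only [hf, Fin.forall_iff, ← Int.isCoprime_iff_gcd_eq_one]
  constructor
  · rintro ⟨⟨u, v, hv, hmod⟩, hne, hf0N, ⟨ρ, hρ⟩, hnot⟩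
    obtain ⟨a, p, m, k, ha, hp, hm, hk, hmp, hapN, hlastN, hform⟩ :=
      exists_gp_params_of_modGP hd hv hmod hne hf0N hρ hnot
    exact ⟨a, p, m, k, ha, hp, hm, hk, hmp, hapN, ⟨f d, hne d (by omega), hlastN, rfl⟩, hform⟩
  · rintro ⟨a, p, m, k, ha, hp, hm, hk, hmp, hapN, ⟨cd, hcd, hlastN, rfl⟩, hform⟩
    exact modGP_of_gp_params hd hN ha hp hm hk hmp hapN hcd hlastN hform
end

section
/- Let d ≥ 2 and let a, p, m, k be nonzero integers with gcd(m,p) = 1, gcd(ap, N) = 1, and c_d := (a m^d − kN)/p a nonzero integer. Set ã = a/gcd(a, c_d), k̃ = k/gcd(a, c_d). Let f̃ ∈ ℤ[x] be any degree-d polynomial with leading coefficient ã satisfying f̃(m/p)·p^d = k̃N. Then an integer vector (a₀,…,a_d) is orthogonal to the vector c = (a p^{d−1}, a p^{d−2}m, …, a m^{d−1}, c_d) if and only if there exist integers r₀,…,r_{d−1} such that Σ_{i=0}^d a_i x^i = r_{d−1} f̃(x) + (px − m)·Σ_{i=0}^{d−2} r_i x^i. -/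
/-!
Identify `(a₀, …, a_d)` with `Q = ∑ aᵢ xⁱ`. Then `⟨Q, c⟩ = a · Qₕ(m, p) + c_d Q_d`, where `Qₕ` is
the homogenization of `Q` in degree `d - 1`. When `Q_d = 0` this vanishes iff `Q(m/p) = 0`, i.e.,
by Gauss's lemma and `gcd(m, p) = 1`, iff `px - m ∣ Q`; in particular every `(px - m) xⁱ` with
`i ≤ d - 2` is orthogonal to `c`. The relation `p c_d = a mᵈ - kN` and `f̃(m/p) pᵈ = k̃N` give
`⟨f̃, c⟩ = 0`. Conversely, `⟨Q, c⟩ = 0` forces `a ∣ c_d Q_d`, hence `ã ∣ Q_d`, and subtracting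
`(Q_d / ã) f̃` reduces to the case `Q_d = 0`.
-/

open Polynomial Finset

namespace Polynomial

theorem eval_homogenize_eq_sum {R : Type*} [CommSemiring R] (Q : R[X]) (n : ℕ) (x : Fin 2 → R) :
    MvPolynomial.eval x (Q.homogenize n) =
      ∑ i ∈ range (n + 1), Q.coeff i * x 0 ^ i * x 1 ^ (n - i) := by
  simp [homogenize, Finset.Nat.sum_antidiagonal_eq_sum_range_succ_mk, MvPolynomial.eval_monomial,
    Finsupp.prod_fintype, mul_assoc]

theorem eval_homogenize_succ {R : Type*} [CommSemiring R] (Q : R[X]) (n : ℕ) (x : Fin 2 → R) :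
    MvPolynomial.eval x (Q.homogenize (n + 1)) =
      x 1 * MvPolynomial.eval x (Q.homogenize n) + Q.coeff (n + 1) * x 0 ^ (n + 1) := by
  rw [eval_homogenize_eq_sum, eval_homogenize_eq_sum, sum_range_succ, Nat.sub_self, pow_zero,
    mul_one, mul_sum]
  congr 1
  refine sum_congr rfl fun i hi => ?_
  rw [Nat.sub_add_comm (Nat.lt_succ_iff.mp (mem_range.mp hi)), pow_succ]
  ring

theorem isPrimitive_C_mul_X_sub_C {R : Type*} [CommRing R] {m p : R} (h : IsCoprime m p) :
    (C p * X - C m).IsPrimitive := by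
  intro r hr
  rw [C_dvd_iff_dvd_coeff] at hr
  exact h.isUnit_of_dvd' (by simpa using hr 0) (by simpa using hr 1)

theorem C_mul_X_sub_C_dvd_iff_eval_homogenize_eq_zero {R : Type*} [CommRing R] [IsDomain R]
    [IsGCDMonoid R] {m p : R} (hp : p ≠ 0) (hmp : IsCoprime m p) {n : ℕ} {Q : R[X]}
    (hQ : Q.natDegree ≤ n) :
    C p * X - C m ∣ Q ↔ MvPolynomial.eval ![m, p] (Q.homogenize n) = 0 := by
  have hφ : Function.Injective (algebraMap R (FractionRing R)) := IsFractionRing.injective R _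
  rw [(isPrimitive_C_mul_X_sub_C hmp).dvd_iff_fraction_map_dvd_fraction_map (FractionRing R),
    ← map_eq_zero_iff _ hφ, MvPolynomial.eval₂_comp, ← MvPolynomial.eval_map, ← homogenize_map]
  set φ := algebraMap R (FractionRing R)
  have hp' : φ p ≠ 0 := (map_ne_zero_iff φ hφ).mpr hp
  have hlin : C (φ p) * X - C (φ m) = C (φ p) * (X - C (φ m / φ p)) := by
    rw [mul_sub, ← C_mul, mul_div_cancel₀ _ hp']
  rw [eval_homogenize (natDegree_map_le.trans hQ) _ (by simpa using hp'), Polynomial.map_sub,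
    Polynomial.map_mul, map_C, map_C, map_X, hlin, (isUnit_C.mpr hp'.isUnit).mul_left_dvd,
    dvd_iff_isRoot, IsRoot.def]
  simp [hp']

theorem coeff_sum_fin_C_mul_X_pow {R : Type*} [Semiring R] {n : ℕ} (v : Fin n → R) (j : Fin n) :
    (∑ i : Fin n, C (v i) * X ^ (i : ℕ)).coeff j = v j := by
  simp [Fin.val_inj]

theorem natDegree_sum_fin_C_mul_X_pow_le {R : Type*} [Semiring R] {n : ℕ} (v : Fin (n + 1) → R) :
    (∑ i : Fin (n + 1), C (v i) * X ^ (i : ℕ)).natDegree ≤ n :=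
  natDegree_sum_le_of_forall_le _ _ fun i _ => (natDegree_C_mul_X_pow_le _ _).trans i.is_le

theorem natDegree_sub_C_mul_le_of_coeff_eq {R : Type*} [CommRing R] {n : ℕ} {P f : R[X]} {s : R}
    (hP : P.natDegree ≤ n + 1) (hf : f.natDegree ≤ n + 1)
    (h : P.coeff (n + 1) = f.coeff (n + 1) * s) :
    (P - C s * f).natDegree ≤ n := by
  have hle : (P - C s * f).natDegree ≤ n + 1 :=
    (natDegree_sub_le_of_le hP ((natDegree_C_mul_le s f).trans hf)).trans (max_self _).le
  simpa using natDegree_le_pred hle (by rw [coeff_sub, coeff_C_mul, h, mul_comm, sub_self])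

theorem natDegree_C_mul_X_sub_C {R : Type*} [Ring R] {p : R} (hp : p ≠ 0) (m : R) :
    (C p * X - C m).natDegree = 1 := by
  rw [natDegree_sub_C, natDegree_C_mul_X _ hp]

theorem natDegree_lt_of_natDegree_C_mul_X_sub_C_mul_le {R : Type*} [CommRing R]
    [IsDomain R] {p m : R} (hp : p ≠ 0) {n : ℕ} (hn : 0 < n) {S : R[X]}
    (h : ((C p * X - C m) * S).natDegree ≤ n) : S.natDegree < n := by
  have hlin := natDegree_C_mul_X_sub_C hp m
  rcases eq_or_ne S 0 with rfl | hS
  · simpa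
  · rw [natDegree_mul (ne_zero_of_natDegree_gt (hlin ▸ Nat.zero_lt_one)) hS, hlin] at h
    omega

theorem natDegree_C_mul_X_sub_C_mul_sum_le {R : Type*} [Ring R] (p m : R) {n : ℕ} (hn : 0 < n)
    (r : ℕ → R) :
    ((C p * X - C m) * ∑ i ∈ range n, C (r i) * X ^ i).natDegree ≤ n := by
  have hsum : (∑ i ∈ range n, C (r i) * X ^ i).natDegree ≤ n - 1 :=
    natDegree_sum_le_of_forall_le _ _ fun i hi =>
      (natDegree_C_mul_X_pow_le _ _).trans (by rw [mem_range] at hi; omega)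
  have hlin : (C p * X - C m).natDegree ≤ 1 := by
    rw [sub_eq_add_neg, ← C_neg]
    exact natDegree_linear_le
  have := natDegree_mul_le.trans (add_le_add hlin hsum)
  omega

end Polynomial

theorem Int.div_gcd_dvd_of_dvd_mul {a b c : ℤ} (ha : a ≠ 0) (h : a ∣ b * c) :
    a / (Int.gcd a b : ℤ) ∣ c := by
  have hg : 0 < Int.gcd a b := Int.gcd_pos_of_ne_zero_left b ha
  have hcop : IsCoprime (a / (Int.gcd a b : ℤ)) (b / (Int.gcd a b : ℤ)) :=
    Int.isCoprime_iff_gcd_eq_one.mpr (Int.gcd_div_gcd_div_gcd hg)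
  refine hcop.dvd_of_dvd_mul_left ((mul_dvd_mul_iff_left (Int.natCast_ne_zero.mpr hg.ne')).mp ?_)
  rwa [← mul_assoc, Int.mul_ediv_cancel' (Int.gcd_dvd_left a b),
    Int.mul_ediv_cancel' (Int.gcd_dvd_right a b)]

theorem Int.gcd_dvd_of_mul_sub_eq_mul {a p k N x cd : ℤ} (hapN : IsCoprime (a * p) N)
    (h : a * x - k * N = p * cd) : (Int.gcd a cd : ℤ) ∣ k := by
  have hga : (Int.gcd a cd : ℤ) ∣ a := Int.gcd_dvd_left a cd
  refine (hapN.of_isCoprime_of_dvd_left (hga.trans (dvd_mul_right a p))).dvd_of_dvd_mul_right ?_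
  rw [show k * N = a * x - p * cd by linarith]
  exact dvd_sub (hga.mul_right _) ((Int.gcd_dvd_right a cd).mul_left _)

section CoeffPairing

variable {R : Type*} [CommRing R]

/-- `coeffPairing n a m p cd Q = ∑ᵢ Qᵢ cᵢ` for `c = (a pⁿ, a pⁿ⁻¹ m, …, a mⁿ, cd)`. -/
noncomputable def coeffPairing (n : ℕ) (a m p cd : R) : R[X] →ₗ[R] R :=
  a • ((MvPolynomial.aeval ![m, p]).toLinearMap ∘ₗ homogenizeLM n) + cd • lcoeff R (n + 1)

@[simp]
theorem coeffPairing_apply (n : ℕ) (a m p cd : R) (Q : R[X]) :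
    coeffPairing n a m p cd Q =
      a * MvPolynomial.eval ![m, p] (Q.homogenize n) + cd * Q.coeff (n + 1) := by
  simp [coeffPairing]

theorem sum_mul_eq_coeffPairing {n : ℕ} {a m p cd : R} {c : Fin (n + 2) → R}
    (hc : ∀ i : Fin (n + 2), (i : ℕ) < n + 1 → c i = a * p ^ (n - i) * m ^ (i : ℕ))
    (hlast : c (Fin.last (n + 1)) = cd) (v : Fin (n + 2) → R) :
    ∑ i, v i * c i = coeffPairing n a m p cd (∑ i : Fin (n + 2), C (v i) * X ^ (i : ℕ)) := by
  have hP := coeff_sum_fin_C_mul_X_pow v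
  rw [Fin.sum_univ_castSucc, coeffPairing_apply, eval_homogenize_eq_sum, hlast, mul_sum,
    ← Fin.sum_univ_eq_sum_range]
  congr 1
  · refine sum_congr rfl fun i _ => ?_
    have hi := hP i.castSucc
    rw [Fin.val_castSucc] at hi
    rw [hc _ (Fin.castSucc_lt_last i), hi, Fin.val_castSucc]
    simp only [Matrix.cons_val_zero, Matrix.cons_val_one]
    ring
  · have hl := hP (Fin.last (n + 1))
    rw [Fin.val_last] at hl
    rw [hl, mul_comm]

theorem coeffPairing_eq_zero_of_eval_homogenize [IsDomain R] {n : ℕ} {a m p cd g k M a' k' : R}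
    (hp : p ≠ 0) (hcdp : a * m ^ (n + 1) - k * M = p * cd) (ha : a = g * a') (hk : k = g * k')
    {f : R[X]} (hcoeff : f.coeff (n + 1) = a')
    (heval : MvPolynomial.eval ![m, p] (f.homogenize (n + 1)) = k' * M) :
    coeffPairing n a m p cd f = 0 := by
  have key : p * coeffPairing n a m p cd f =
      a * MvPolynomial.eval ![m, p] (f.homogenize (n + 1)) -
        f.coeff (n + 1) * (a * m ^ (n + 1) - p * cd) := by
    rw [coeffPairing_apply, eval_homogenize_succ]
    simp only [Matrix.cons_val_zero, Matrix.cons_val_one]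
    ring
  rw [heval, hcoeff] at key
  subst ha hk
  exact (mul_eq_zero.mp (by linear_combination key - a' * hcdp)).resolve_left hp

theorem coeffPairing_eq_zero_iff_dvd [IsDomain R] [IsGCDMonoid R] {n : ℕ} {a m p cd : R}
    (ha : a ≠ 0) (hp : p ≠ 0) (hmp : IsCoprime m p) {Q : R[X]} (hQ : Q.natDegree ≤ n) :
    coeffPairing n a m p cd Q = 0 ↔ C p * X - C m ∣ Q := by
  rw [coeffPairing_apply, coeff_eq_zero_of_natDegree_lt (Nat.lt_succ_of_le hQ), mul_zero, add_zero,
    mul_eq_zero, or_iff_right ha, C_mul_X_sub_C_dvd_iff_eval_homogenize_eq_zero hp hmp hQ]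

end CoeffPairing

theorem div_gcd_dvd_coeff_of_coeffPairing_eq_zero {n : ℕ} {a m p cd : ℤ} (ha : a ≠ 0) {P : ℤ[X]}
    (h : coeffPairing n a m p cd P = 0) : a / (Int.gcd a cd : ℤ) ∣ P.coeff (n + 1) := by
  rw [coeffPairing_apply] at h
  exact Int.div_gcd_dvd_of_dvd_mul ha
    ⟨-MvPolynomial.eval ![m, p] (P.homogenize n), by linear_combination h⟩

/-- Lemma 4.2: let `c = (a p^{d−1}, a p^{d−2} m, …, a m^{d−1}, c_d)` with
`c_d = (a m^d − kN)/p` nonzero, `gcd(m,p)=1`, `gcd(ap,N)=1`, and set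
`ã = a/gcd(a,c_d)`, `k̃ = k/gcd(a,c_d)`.  Then, for any degree-`d` polynomial
`f̃ ∈ ℤ[x]` with leading coefficient `ã` and `f̃(m/p)·p^d = k̃N`, an integer vector
`(a₀,…,a_d)` is orthogonal to `c` if and only if there exist integers `r₀,…,r_{d−1}` with
`Σ aᵢ xⁱ = r_{d−1} f̃(x) + (px − m)·Σ_{i≤d−2} rᵢ xⁱ`. -/
theorem gp_orthogonal_basis (d : ℕ) (hd : 2 ≤ d) (N : ℕ)
    (a p m k : ℤ) (ha : a ≠ 0) (hp : p ≠ 0)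
    (hmp : Int.gcd m p = 1) (hapN : Int.gcd (a * p) N = 1)
    (cd : ℤ) (hcdp : a * m ^ d - k * (N : ℤ) = p * cd)
    (c : Fin (d + 1) → ℤ)
    (hc : ∀ i : Fin (d + 1), (i : ℕ) < d → c i = a * p ^ (d - 1 - (i : ℕ)) * m ^ (i : ℕ))
    (hclast : c ⟨d, by omega⟩ = cd)
    (f : Polynomial ℤ) (hfdeg : f.natDegree = d)
    (hflc : f.leadingCoeff = a / (Int.gcd a cd : ℤ))
    (hfval : ∑ i ∈ Finset.range (d + 1), f.coeff i * m ^ i * p ^ (d - i)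
        = (k / (Int.gcd a cd : ℤ)) * N) :
    ∀ v : Fin (d + 1) → ℤ,
      (∑ i, v i * c i = 0) ↔
        ∃ r : ℕ → ℤ,
          (∑ i : Fin (d + 1), Polynomial.C (v i) * Polynomial.X ^ (i : ℕ)) =
            Polynomial.C (r (d - 1)) * f +
              (Polynomial.C p * Polynomial.X - Polynomial.C m) *
                ∑ i ∈ Finset.range (d - 1), Polynomial.C (r i) * Polynomial.X ^ i := by
  obtain ⟨n, rfl⟩ : ∃ n, d = n + 1 := ⟨d - 1, by omega⟩
  simp only [Nat.add_sub_cancel] at hc ⊢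
  have hmp' : IsCoprime m p := Int.isCoprime_iff_gcd_eq_one.mpr hmp
  set g : ℤ := (Int.gcd a cd : ℤ)
  have hgk : g ∣ k := Int.gcd_dvd_of_mul_sub_eq_mul (Int.isCoprime_iff_gcd_eq_one.mpr hapN) hcdp
  have hfc : f.coeff (n + 1) = a / g := by rw [← hfdeg, coeff_natDegree, hflc]
  have hf : coeffPairing n a m p cd f = 0 :=
    coeffPairing_eq_zero_of_eval_homogenize hp hcdp
      (Int.mul_ediv_cancel' (Int.gcd_dvd_left a cd)).symm (Int.mul_ediv_cancel' hgk).symm hfc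
      (by rw [eval_homogenize_eq_sum]; exact hfval)
  intro v
  rw [sum_mul_eq_coeffPairing hc hclast]
  set P := ∑ i : Fin (n + 2), C (v i) * X ^ (i : ℕ)
  constructor
  · intro hv
    obtain ⟨s, hs⟩ := div_gcd_dvd_coeff_of_coeffPairing_eq_zero ha hv
    rw [← hfc] at hs
    have hdeg := natDegree_sub_C_mul_le_of_coeff_eq (natDegree_sum_fin_C_mul_X_pow_le v) hfdeg.le hs
    obtain ⟨R, hR⟩ := (coeffPairing_eq_zero_iff_dvd ha hp hmp' hdeg).mp
      (by rw [map_sub, C_mul', map_smul, hv, hf, smul_zero, sub_zero])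
    have hRdeg := natDegree_lt_of_natDegree_C_mul_X_sub_C_mul_le hp (by omega) (hR ▸ hdeg)
    refine ⟨Function.update R.coeff n s, ?_⟩
    rw [Function.update_self, sum_congr rfl fun i hi => by
      rw [Function.update_of_ne (mem_range.mp hi).ne], ← as_sum_range_C_mul_X_pow' R hRdeg, ← hR]
    ring
  · rintro ⟨r, hr⟩
    rw [hr, map_add, C_mul', map_smul, hf, smul_zero, zero_add,
      coeffPairing_eq_zero_iff_dvd ha hp hmp' (natDegree_C_mul_X_sub_C_mul_sum_le p m (by omega) r)]
    exact dvd_mul_right _ _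
end

section
/- With a, p, m, k, N nonzero integers, gcd(m,p)=1, gcd(ap,N)=1, c_d := (a m^d − kN)/p a nonzero integer, ã = a/gcd(a,c_d), k̃ = k/gcd(a,c_d): there exists a degree-d integer polynomial f̃ with leading coefficient ã such that f̃(m/p)·p^d = k̃N. -/
open Polynomial Finset

/-!
Dividing `a m^d - k N = p c_d` by `g = gcd(a, c_d)` gives `ã m^d - k̃ N = p c̃` with
`c̃ = c_d / g`; here `g ∣ k` because `g ∣ k N` and `g ∣ a` is coprime to `N`. Since `m` and `p`
are coprime, so are `m^(d-1)` and `p^(d-1)`: pick `u m^(d-1) + v p^(d-1) = 1`. Then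
`f̃ = ã X^d - c̃ u X^(d-1) - c̃ v` satisfies `p^d f̃(m/p) = ã m^d - p c̃ = k̃ N`.
-/

section ScaledEval

variable {R : Type*} [CommRing R]

/-- The value `p^d f(m/p)` of a polynomial `f` of degree at most `d`. -/
def scaledEval (d : ℕ) (m p : R) (f : R[X]) : R :=
  ∑ i ∈ range (d + 1), f.coeff i * m ^ i * p ^ (d - i)

variable (d : ℕ) (m p : R)

theorem scaledEval_add (f g : R[X]) :
    scaledEval d m p (f + g) = scaledEval d m p f + scaledEval d m p g := by
  simp only [scaledEval, coeff_add, add_mul, sum_add_distrib]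

theorem scaledEval_monomial {j : ℕ} (hj : j ≤ d) (c : R) :
    scaledEval d m p (monomial j c) = c * m ^ j * p ^ (d - j) := by
  simp only [scaledEval, coeff_monomial, ite_mul, zero_mul, sum_ite_eq, mem_range]
  rw [if_pos (by omega)]

theorem exists_scaledEval_eq_sub {m p : R} (hmp : IsCoprime m p) {d : ℕ} (hd : 1 ≤ d)
    {A : R} (hA : A ≠ 0) (c : R) :
    ∃ f : R[X], f.natDegree = d ∧ f.leadingCoeff = A ∧
      scaledEval d m p f = A * m ^ d - p * c := by
  obtain ⟨u, v, huv⟩ := hmp.pow (m := d - 1) (n := d - 1)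
  set g : R[X] := monomial 0 (-(c * v)) + monomial (d - 1) (-(c * u))
  have hg : g.degree < (monomial d A).degree := by
    rw [degree_monomial d hA]
    refine (degree_add_le _ _).trans_lt (max_lt ?_ ?_) <;>
      exact (degree_monomial_le _ _).trans_lt (by exact_mod_cast (by omega))
  refine ⟨g + monomial d A, ?_, ?_, ?_⟩
  · rw [natDegree_add_eq_right_of_degree_lt hg, natDegree_monomial_eq d hA]
  · rw [leadingCoeff_add_of_degree_lt hg, leadingCoeff_monomial]
  · have hpd : p ^ d = p ^ (d - 1) * p := by rw [← pow_succ, Nat.sub_add_cancel hd]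
    simp only [g, scaledEval_add, scaledEval_monomial d m p (Nat.zero_le d),
      scaledEval_monomial d m p (Nat.sub_le d 1), scaledEval_monomial d m p le_rfl,
      Nat.sub_zero, Nat.sub_self, Nat.sub_sub_self hd, pow_zero, pow_one, hpd]
    linear_combination (-(c * p)) * huv

end ScaledEval

theorem dvd_of_mul_sub_mul_eq_mul {R : Type*} [CommRing R] {a b k N p c g : R}
    (h : a * b - k * N = p * c) (hga : g ∣ a) (hgc : g ∣ c) (haN : IsCoprime a N) : g ∣ k := by
  have hgkN : g ∣ k * N := by
    rw [show k * N = a * b - p * c by rw [← h]; ring]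
    exact dvd_sub (hga.mul_right b) (hgc.mul_left p)
  exact (haN.of_isCoprime_of_dvd_left hga).dvd_of_dvd_mul_right hgkN

theorem exists_base_mp_polynomial_general (d : ℕ) (hd : 2 ≤ d) (N : ℕ)
    (a p m k : ℤ) (ha : a ≠ 0)
    (hmp : Int.gcd m p = 1) (hapN : Int.gcd (a * p) N = 1)
    (cd : ℤ) (hcdp : a * m ^ d - k * (N : ℤ) = p * cd) :
    ∃ f : Polynomial ℤ, f.natDegree = d ∧
      f.leadingCoeff = a / (Int.gcd a cd : ℤ) ∧
      ∑ i ∈ Finset.range (d + 1), f.coeff i * m ^ i * p ^ (d - i)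
        = (k / (Int.gcd a cd : ℤ)) * N := by
  set g : ℤ := (Int.gcd a cd : ℤ)
  have hg : g ≠ 0 := Int.natCast_ne_zero.mpr (Int.gcd_ne_zero_left ha)
  have haN : IsCoprime a N := (Int.isCoprime_iff_gcd_eq_one.mpr hapN).of_mul_left_left
  obtain ⟨A, hA⟩ := Int.gcd_dvd_left a cd
  obtain ⟨C, hC⟩ := Int.gcd_dvd_right a cd
  obtain ⟨K, hK⟩ := dvd_of_mul_sub_mul_eq_mul hcdp (Int.gcd_dvd_left a cd)
    (Int.gcd_dvd_right a cd) haN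
  have hreduced : A * m ^ d - K * N = p * C := by
    refine mul_left_cancel₀ hg ?_
    linear_combination hcdp - m ^ d * hA + N * hK + p * hC
  obtain ⟨f, hdeg, hlead, heval⟩ := exists_scaledEval_eq_sub (d := d)
    (Int.isCoprime_iff_gcd_eq_one.mpr hmp) (by omega) (right_ne_zero_of_mul (hA ▸ ha)) C
  refine ⟨f, hdeg, ?_, ?_⟩
  · rw [hlead, hA, Int.mul_ediv_cancel_left _ hg]
  · rw [hK, Int.mul_ediv_cancel_left _ hg, ← scaledEval, heval]
    linear_combination hreduced

/-- Existence of the auxiliary polynomial `f̃` (produced by Algorithm 1): with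
`a, p, m, k, N` nonzero integers, `gcd(m,p)=1`, `gcd(ap,N)=1`, and
`c_d = (a m^d − kN)/p` a nonzero integer, setting `ã = a/gcd(a,c_d)` and
`k̃ = k/gcd(a,c_d)`, there exists a degree-`d` integer polynomial `f̃` with leading
coefficient `ã` such that `f̃(m/p)·p^d = k̃N` (i.e. `Σ ãᵢ mⁱ p^{d−i} = k̃N`). -/
theorem exists_base_mp_polynomial (d : ℕ) (hd : 2 ≤ d) (N : ℕ) (hN : 0 < N)
    (a p m k : ℤ) (ha : a ≠ 0) (hp : p ≠ 0) (hm : m ≠ 0) (hk : k ≠ 0)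
    (hmp : Int.gcd m p = 1) (hapN : Int.gcd (a * p) N = 1)
    (cd : ℤ) (hcd : cd ≠ 0) (hcdp : a * m ^ d - k * (N : ℤ) = p * cd) :
    ∃ f : Polynomial ℤ, f.natDegree = d ∧
      f.leadingCoeff = a / (Int.gcd a cd : ℤ) ∧
      ∑ i ∈ Finset.range (d + 1), f.coeff i * m ^ i * p ^ (d - i)
        = (k / (Int.gcd a cd : ℤ)) * N :=
  exists_base_mp_polynomial_general d hd N a p m k ha hmp hapN cd hcdp
end
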